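/- Suppose the common distribution F of the X_i is continuous (atomless), and let n ≥ 2 and r > 0. If there exist λ > r/(n−1) and a constant C > 0 such that q(h) ≤ C·h^λ for all h ∈ (0,1], then E|T_n|^r < ∞. -/

import Mathlib

open MeasureTheory ProbabilityTheory Filter

noncomputable section

/-- The partial sum `S_n = ∑_{i=1}^n X_i`. -/
def Sn {Ω : Type*} (X : ℕ → Ω → ℝ) (n : ℕ) (ω : Ω) : ℝ :=
  ∑ i ∈ Finset.range n, X i ω

/-- `V_n = (∑_{i=1}^n X_i²)^{1/2}`. -/
def Vn {Ω : Type*} (X : ℕ → Ω → ℝ) (n : ℕ) (ω : Ω) : ℝ :=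
  Real.sqrt (∑ i ∈ Finset.range n, (X i ω) ^ 2)

/-- The sample variance `σ̂_n² = (1/(n-1)) ∑_{i=1}^n (X_i - S_n/n)²`. -/
def sigmaSq {Ω : Type*} (X : ℕ → Ω → ℝ) (n : ℕ) (ω : Ω) : ℝ :=
  (1 / ((n : ℝ) - 1)) * ∑ i ∈ Finset.range n, (X i ω - Sn X n ω / n) ^ 2

/-- Student's t-statistic `T_n = n^{-1/2} σ̂_n^{-1} S_n` when `σ̂_n > 0`, and `0` otherwise. -/
def Tstat {Ω : Type*} (X : ℕ → Ω → ℝ) (n : ℕ) (ω : Ω) : ℝ :=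
  if 0 < sigmaSq X n ω then Sn X n ω / (Real.sqrt n * Real.sqrt (sigmaSq X n ω)) else 0

/-- `U_n* = (S_n/V_n)²` if `V_n > 0` and `(S_n/V_n)² ≠ n`, and `U_n* = 0` otherwise. -/
def Ustar {Ω : Type*} (X : ℕ → Ω → ℝ) (n : ℕ) (ω : Ω) : ℝ :=
  if 0 < Vn X n ω ∧ (Sn X n ω / Vn X n ω) ^ 2 ≠ (n : ℝ) then (Sn X n ω / Vn X n ω) ^ 2 else 0

/-!
If `|T_n| ≥ t`, the sample variance is at most `n·max_j X_j² / t²`, so every observation lies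
within relative distance `2n/t` of the one of largest modulus. Conditioning on that one, the other
`n - 1` independent observations each do so with probability at most `C (2n/t)^λ`, whence
`P(|T_n| ≥ t) ≲ t^{-λ(n-1)}`. Since `λ(n-1) > r`, this tail is integrable against `r t^{r-1} dt`,
and the layer-cake formula gives `E|T_n|^r < ∞`.
-/

open scoped ENNReal

section Deterministic

variable {Ω : Type*} (X : ℕ → Ω → ℝ) (n : ℕ) (ω : Ω)

lemma sub_one_mul_sigmaSq (hσ : 0 < sigmaSq X n ω) :
    ((n : ℝ) - 1) * sigmaSq X n ω = ∑ i ∈ Finset.range n, (X i ω - Sn X n ω / n) ^ 2 := by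
  have hn : (n : ℝ) - 1 ≠ 0 := by
    intro h
    simp [sigmaSq, h] at hσ
  rw [sigmaSq, ← mul_assoc, mul_one_div_cancel hn, one_mul]

lemma tstat_sq (hσ : 0 < sigmaSq X n ω) :
    Tstat X n ω ^ 2 = Sn X n ω ^ 2 / (n * sigmaSq X n ω) := by
  rw [Tstat, if_pos hσ, div_pow, mul_pow, Real.sq_sqrt n.cast_nonneg, Real.sq_sqrt hσ.le]

lemma sq_Sn_le {j : ℕ} (hj : ∀ i ∈ Finset.range n, |X i ω| ≤ |X j ω|) :
    Sn X n ω ^ 2 ≤ (n * |X j ω|) ^ 2 := by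
  rw [← sq_abs]
  refine pow_le_pow_left₀ (abs_nonneg _) ?_ 2
  calc |Sn X n ω| ≤ ∑ i ∈ Finset.range n, |X i ω| := Finset.abs_sum_le_sum_abs _ _
    _ ≤ n * |X j ω| := by simpa using Finset.sum_le_card_nsmul _ _ _ hj

lemma sq_sub_le_four_mul_sigmaSq (hσ : 0 < sigmaSq X n ω) {i j : ℕ}
    (hi : i ∈ Finset.range n) (hj : j ∈ Finset.range n) :
    (X i ω - X j ω) ^ 2 ≤ 4 * (((n : ℝ) - 1) * sigmaSq X n ω) := by
  set m := Sn X n ω / n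
  have hle : ∀ k ∈ Finset.range n, (X k ω - m) ^ 2 ≤ ((n : ℝ) - 1) * sigmaSq X n ω := by
    intro k hk
    rw [sub_one_mul_sigmaSq X n ω hσ]
    exact Finset.single_le_sum (f := fun k => (X k ω - m) ^ 2) (fun _ _ => sq_nonneg _) hk
  nlinarith [hle i hi, hle j hj, sq_nonneg (X i ω + X j ω - 2 * m)]

lemma exists_abs_sub_le_of_le_abs_tstat {t : ℝ} (ht : 0 < t) (hT : t ≤ |Tstat X n ω|) :
    ∃ j ∈ Finset.range n, ∀ i ∈ Finset.range n, |X i ω - X j ω| ≤ |X j ω| * (2 * n / t) := by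
  have hσ : 0 < sigmaSq X n ω := by
    by_contra hσ
    rw [Tstat, if_neg hσ, abs_zero] at hT
    linarith
  have hn : 0 < n := by
    rw [Nat.pos_iff_ne_zero]
    rintro rfl
    simp [sigmaSq] at hσ
  obtain ⟨j, hj, hjmax⟩ := Finset.exists_max_image (Finset.range n) (fun i => |X i ω|)
    (Finset.nonempty_range_iff.2 hn.ne')
  refine ⟨j, hj, fun i hi => ?_⟩
  have hσt : t ^ 2 * (n * sigmaSq X n ω) ≤ (n * |X j ω|) ^ 2 := by
    have hT2 : t ^ 2 ≤ Tstat X n ω ^ 2 := by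
      rw [← sq_abs (Tstat X n ω)]; exact pow_le_pow_left₀ ht.le hT 2
    rw [tstat_sq X n ω hσ, le_div_iff₀ (by positivity)] at hT2
    exact hT2.trans (sq_Sn_le X n ω hjmax)
  have hsq : (t * |X i ω - X j ω|) ^ 2 ≤ (|X j ω| * (2 * n)) ^ 2 := by
    have h4 := sq_sub_le_four_mul_sigmaSq X n ω hσ hi hj
    have hn0 : (0 : ℝ) ≤ n := n.cast_nonneg
    rw [mul_pow, sq_abs]
    nlinarith [mul_le_mul_of_nonneg_left h4 (sq_nonneg t), sq_nonneg (X j ω), hσ.le]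
  rw [mul_div_assoc', le_div_iff₀ ht, mul_comm]
  exact (pow_le_pow_iff_left₀ (by positivity) (by positivity) two_ne_zero).1 hsq

end Deterministic

lemma measurable_tstat {Ω : Type*} [MeasurableSpace Ω] {X : ℕ → Ω → ℝ}
    (hmeas : ∀ i, Measurable (X i)) (n : ℕ) : Measurable (Tstat X n) := by
  have hσ : Measurable (sigmaSq X n) := by unfold sigmaSq Sn; fun_prop
  unfold Tstat Sn
  exact Measurable.ite (measurableSet_lt measurable_const hσ) (by fun_prop) measurable_const

namespace ProbabilityTheory

variable {Ω ι β : Type*} [MeasurableSpace Ω] [MeasurableSpace β] {P : Measure Ω}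
  {X : ι → Ω → β} {μ : Measure β}

lemma iIndepFun.measure_biInter_preimage_eq_pow (hindep : iIndepFun X P)
    (hdist : ∀ i, P.map (X i) = μ) (hmeas : ∀ i, Measurable (X i)) {A : Set β}
    (hA : MeasurableSet A) (s : Finset ι) :
    P (⋂ i ∈ s, X i ⁻¹' A) = μ A ^ s.card := by
  rw [hindep.measure_inter_preimage_eq_mul s (sets := fun _ => A) fun _ _ => hA,
    ← Finset.prod_const]
  refine Finset.prod_congr rfl fun i _ => ?_
  rw [← Measure.map_apply (hmeas i) hA, hdist i]

lemma iIndepFun.measure_forall_mem_le_pow [IsProbabilityMeasure P]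
    (hindep : iIndepFun X P) (hdist : ∀ i, P.map (X i) = μ) (hmeas : ∀ i, Measurable (X i))
    {B : Set (β × β)} (hB : MeasurableSet B) {c : ℝ≥0∞} (hc : ∀ x, μ (Prod.mk x ⁻¹' B) ≤ c) {j : ι}
    {s : Finset ι} (hj : j ∉ s) :
    P {ω | ∀ i ∈ s, (X j ω, X i ω) ∈ B} ≤ c ^ s.card := by
  set Y : Ω → s → β := fun ω i => X i ω
  have hY : Measurable Y := measurable_pi_lambda _ fun i => hmeas i
  have hindepY : IndepFun (X j) Y P :=
    (hindep.indepFun_finset {j} s (Finset.disjoint_singleton_left.2 hj) hmeas).comp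
      (measurable_pi_apply (⟨j, Finset.mem_singleton_self j⟩ : ({j} : Finset ι))) measurable_id
  set E : Set (β × (s → β)) := {p | ∀ i, (p.1, p.2 i) ∈ B}
  have hE : MeasurableSet E := by
    simp only [E, Set.ofPred_forall]
    exact MeasurableSet.iInter fun i =>
      hB.preimage (measurable_fst.prodMk ((measurable_pi_apply i).comp measurable_snd))
  have hfiber : ∀ x, P.map Y (Prod.mk x ⁻¹' E) ≤ c ^ s.card := fun x => by
    have hpre : Y ⁻¹' (Prod.mk x ⁻¹' E) = ⋂ i ∈ s, X i ⁻¹' (Prod.mk x ⁻¹' B) := by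
      ext ω; simp [Y, E]
    rw [Measure.map_apply hY (hE.preimage measurable_prodMk_left), hpre,
      hindep.measure_biInter_preimage_eq_pow hdist hmeas (measurable_prodMk_left hB)]
    exact pow_le_pow_left' (hc x) _
  have : IsProbabilityMeasure (P.map (X j)) :=
    Measure.isProbabilityMeasure_map (hmeas j).aemeasurable
  calc P {ω | ∀ i ∈ s, (X j ω, X i ω) ∈ B} = P.map (fun ω => (X j ω, Y ω)) E := by
        rw [Measure.map_apply ((hmeas j).prodMk hY) hE]; congr 1; ext ω; simp [Y, E]
    _ = ∫⁻ x, P.map Y (Prod.mk x ⁻¹' E) ∂(P.map (X j)) := by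
        rw [(indepFun_iff_map_prod_eq_prod_map_map (hmeas j).aemeasurable hY.aemeasurable).1
          hindepY, Measure.prod_apply hE]
    _ ≤ ∫⁻ _, c ^ s.card ∂(P.map (X j)) := lintegral_mono hfiber
    _ = c ^ s.card := by simp

end ProbabilityTheory

lemma measure_le_abs_tstat_le {Ω : Type*} [MeasurableSpace Ω] {P : Measure Ω}
    [IsProbabilityMeasure P] {X : ℕ → Ω → ℝ} {μ : Measure ℝ} (hindep : iIndepFun X P)
    (hdist : ∀ i, P.map (X i) = μ) (hmeas : ∀ i, Measurable (X i)) (n : ℕ) {t : ℝ} (ht : 0 < t)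
    {c : ℝ≥0∞} (hc : ∀ x, μ {y | |y - x| ≤ |x| * (2 * n / t)} ≤ c) :
    P {ω | t ≤ |Tstat X n ω|} ≤ n * c ^ (n - 1) := by
  set B : Set (ℝ × ℝ) := {p | |p.2 - p.1| ≤ |p.1| * (2 * n / t)}
  have hB : MeasurableSet B := measurableSet_le (by fun_prop) (by fun_prop)
  calc P {ω | t ≤ |Tstat X n ω|}
      ≤ P (⋃ j ∈ Finset.range n, {ω | ∀ i ∈ (Finset.range n).erase j, (X j ω, X i ω) ∈ B}) :=
        measure_mono fun ω hω => by
          obtain ⟨j, hj, hclose⟩ := exists_abs_sub_le_of_le_abs_tstat X n ω ht hω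
          exact Set.mem_biUnion hj fun i hi => hclose i (Finset.mem_of_mem_erase hi)
    _ ≤ ∑ j ∈ Finset.range n, P {ω | ∀ i ∈ (Finset.range n).erase j, (X j ω, X i ω) ∈ B} :=
        measure_biUnion_finset_le _ _
    _ ≤ ∑ j ∈ Finset.range n, c ^ (n - 1) := Finset.sum_le_sum fun j hj => by
        simpa [Finset.card_erase_of_mem hj] using hindep.measure_forall_mem_le_pow
          hdist hmeas hB hc (Finset.notMem_erase j (Finset.range n))
    _ = n * c ^ (n - 1) := by simp

lemma lintegral_rpow_lt_top_of_meas_le_rpow {α : Type*} [MeasurableSpace α] {μ : Measure α}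
    [IsFiniteMeasure μ] {f : α → ℝ} (hf_nn : 0 ≤ᵐ[μ] f) (hf : AEMeasurable f μ)
    {r p t₀ D : ℝ} (hr : 0 < r) (hrp : r < p) (ht₀ : 0 < t₀)
    (htail : ∀ t, t₀ ≤ t → μ {a | t ≤ f a} ≤ ENNReal.ofReal (D * t ^ (-p))) :
    ∫⁻ a, ENNReal.ofReal (f a ^ r) ∂μ < ∞ := by
  rw [lintegral_rpow_eq_lintegral_meas_le_mul μ hf_nn hf hr,
    ← Set.Ioc_union_Ioi_eq_Ioi ht₀.le, lintegral_union measurableSet_Ioi Set.Ioc_disjoint_Ioi_same]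
  refine ENNReal.mul_lt_top ENNReal.ofReal_lt_top (ENNReal.add_lt_top.2 ⟨?_, ?_⟩)
  · have hint : IntegrableOn (fun t : ℝ => t ^ (r - 1)) (Set.Ioc 0 t₀) :=
      (intervalIntegrable_iff_integrableOn_Ioc_of_le ht₀.le).1
        (intervalIntegral.intervalIntegrable_rpow' (by linarith))
    calc ∫⁻ t in Set.Ioc 0 t₀, μ {a | t ≤ f a} * ENNReal.ofReal (t ^ (r - 1))
        ≤ ∫⁻ t in Set.Ioc 0 t₀, μ Set.univ * ENNReal.ofReal (t ^ (r - 1)) :=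
          lintegral_mono fun t => by gcongr; exact Set.subset_univ _
      _ < ∞ := by
          rw [lintegral_const_mul' _ _ (measure_ne_top μ _)]
          exact ENNReal.mul_lt_top (measure_lt_top μ _) hint.setLIntegral_lt_top
  · have hint : IntegrableOn (fun t : ℝ => D * t ^ (r - 1 - p)) (Set.Ioi t₀) :=
      (integrableOn_Ioi_rpow_of_lt (by linarith) ht₀).const_mul D
    calc ∫⁻ t in Set.Ioi t₀, μ {a | t ≤ f a} * ENNReal.ofReal (t ^ (r - 1))
        ≤ ∫⁻ t in Set.Ioi t₀, ENNReal.ofReal (D * t ^ (r - 1 - p)) :=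
          setLIntegral_mono' measurableSet_Ioi fun t (ht : t₀ < t) => by
            have ht0 : 0 < t := ht₀.trans ht
            calc μ {a | t ≤ f a} * ENNReal.ofReal (t ^ (r - 1))
                ≤ ENNReal.ofReal (D * t ^ (-p)) * ENNReal.ofReal (t ^ (r - 1)) := by
                  gcongr; exact htail t ht.le
              _ = ENNReal.ofReal (D * t ^ (r - 1 - p)) := by
                  rw [← ENNReal.ofReal_mul' (Real.rpow_nonneg ht0.le _), mul_assoc,
                    ← Real.rpow_add ht0]
                  ring_nf
      _ < ∞ := hint.setLIntegral_lt_top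

lemma pow_mul_div_rpow {a t : ℝ} (ha : 0 ≤ a) (ht : 0 < t) (C lam : ℝ) (m : ℕ) :
    (C * (a / t) ^ lam) ^ m = C ^ m * a ^ (lam * m) * t ^ (-(lam * m)) := by
  rw [mul_pow, ← Real.rpow_natCast ((a / t) ^ lam), ← Real.rpow_mul (div_nonneg ha ht.le),
    Real.div_rpow ha ht.le, Real.rpow_neg ht.le, div_eq_mul_inv, mul_assoc]

theorem lintegral_tstat_lt_top_of_concentration_general {Ω : Type*} [MeasurableSpace Ω]
    (P : Measure Ω) [IsProbabilityMeasure P]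
    (X : ℕ → Ω → ℝ) (hmeas : ∀ i, Measurable (X i))
    (hindep : iIndepFun X P)
    (μ : Measure ℝ) (hdist : ∀ i, P.map (X i) = μ)
    (n : ℕ) (hn : 2 ≤ n) (r : ℝ) (hr : 0 < r)
    (lam C : ℝ) (hlam : r / ((n : ℝ) - 1) < lam) (hC : 0 < C)
    (hq : ∀ h ∈ Set.Ioc (0 : ℝ) 1, ∀ x : ℝ,
      μ {y | |y - x| ≤ |x| * h} ≤ ENNReal.ofReal (C * h ^ lam)) :
    (∫⁻ ω, ENNReal.ofReal (|Tstat X n ω| ^ r) ∂P) < ⊤ := by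
  have hn' : (2 : ℝ) ≤ n := by exact_mod_cast hn
  have hrp : r < lam * (n - 1 : ℕ) := by
    rw [Nat.cast_sub (by omega), Nat.cast_one, ← div_lt_iff₀ (by linarith)]
    exact hlam
  refine lintegral_rpow_lt_top_of_meas_le_rpow
    (D := n * C ^ (n - 1) * (2 * n) ^ (lam * (n - 1 : ℕ)))
    (Eventually.of_forall fun _ => abs_nonneg _)
    (measurable_tstat hmeas n).abs.aemeasurable hr hrp (by positivity : (0 : ℝ) < 2 * n)
    fun t ht => ?_
  have ht0 : 0 < t := by linarith
  have hh : 2 * n / t ∈ Set.Ioc (0 : ℝ) 1 := ⟨by positivity, (div_le_one ht0).2 ht⟩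
  calc P {ω | t ≤ |Tstat X n ω|} ≤ n * ENNReal.ofReal (C * (2 * n / t) ^ lam) ^ (n - 1) :=
        measure_le_abs_tstat_le hindep hdist hmeas n ht0 (hq _ hh)
    _ = ENNReal.ofReal (n * C ^ (n - 1) * (2 * n) ^ (lam * (n - 1 : ℕ))
          * t ^ (-(lam * (n - 1 : ℕ)))) := by
        rw [← ENNReal.ofReal_pow (by positivity), ← ENNReal.ofReal_natCast,
          ← ENNReal.ofReal_mul n.cast_nonneg, pow_mul_div_rpow (by positivity) ht0, mul_assoc,
          mul_assoc, mul_assoc]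

/-- Theorem 4(i) (Theorem `thm3`(i)): if the common distribution `μ` of the i.i.d. `X_i` is
atomless and its concentration function satisfies `q(h) ≤ C·h^λ` on `(0,1]` for some
`λ > r/(n−1)` and `C > 0`, then `E|T_n|^r < ∞`. -/
theorem lintegral_tstat_lt_top_of_concentration {Ω : Type*} [MeasurableSpace Ω]
    (P : Measure Ω) [IsProbabilityMeasure P]
    (X : ℕ → Ω → ℝ) (hmeas : ∀ i, Measurable (X i))
    (hindep : iIndepFun X P)
    (μ : Measure ℝ) (hdist : ∀ i, P.map (X i) = μ)
    (hcont : ∀ x : ℝ, μ {x} = 0)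
    (n : ℕ) (hn : 2 ≤ n) (r : ℝ) (hr : 0 < r)
    (lam C : ℝ) (hlam : r / ((n : ℝ) - 1) < lam) (hC : 0 < C)
    (hq : ∀ h ∈ Set.Ioc (0 : ℝ) 1, ∀ x : ℝ,
      μ {y | |y - x| ≤ |x| * h} ≤ ENNReal.ofReal (C * h ^ lam)) :
    (∫⁻ ω, ENNReal.ofReal (|Tstat X n ω| ^ r) ∂P) < ⊤ :=
  lintegral_tstat_lt_top_of_concentration_general P X hmeas hindep μ hdist n hn r hr lam C hlam hC
    hq

end
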